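/- arXiv:2204.03271 — 2 statements merged into one kernel-verified Lean document; each statement's English description precedes it below -/
import Mathlib

section
/- Let H ∈ (0, 1/2), let r ∈ (1, (H+1/2)^{−1}), let q := r/(r−1), and let c : ℝ → ℝ be measurable and even with ‖c‖_{L^q(ℝ)} < ∞ and ∫₀^{∞} v^{1/2−H}|c(v)| dv < ∞. Then there exists a constant C > 0, depending only on H, r, ‖c‖_{L^q(ℝ)} and ∫₀^{∞} v^{1/2−H}|c(v)| dv, such that for all T ≥ 1: (1/T²)·∫₁^{T} ∫₀^{t₁−1} ( ∫_{t₂}^{t₁} ∫₀^{t₂} (t₁−s₁)^{−H−1/2}(t₂−s₂)^{−H−1/2} |c(s₁−s₂)| ds₂ ds₁ )² dt₂ dt₁ ≤ C·T^{1/r − 1/2 − 3H}. -/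
open Real MeasureTheory
open Set
open scoped ENNReal

/-!
With `p = -H - 1/2`, the inner double integral is dominated by the `ℝ≥0∞`-valued
`J(t₁, t₂) = kernelIntegral p c t₁ t₂`, and it suffices to bound `∫∫ J²` over
`0 < t₂ < t₁ ≤ T` by a multiple of `T^{3p+3+1/r}`. One factor of `J²` is bounded pointwise:
Hölder's inequality in `s₂` with exponents `r`, `q` and
`∫_{t₂}^{t₁} (t₁ - s₁)^p ds₁ ≤ t₁^{p+1}/(p+1)` give `J ≤ C t₁^{2p+1+1/r}`. For the other
factor, Tonelli moves the `t₂`-integration inside, where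
`∫_{s₂}^{s₁} (t₂ - s₂)^p dt₂ = (s₁ - s₂)^{p+1}/(p+1)` turns the `s₂`-integral into the moment
`∫₀^∞ v^{p+1} |c v| dv`; hence `∫₀^{t₁} J dt₂ ≤ C t₁^{p+1}`.
-/

section PowerKernel

variable {p x y : ℝ}

theorem lintegral_Ioc_enorm_rpow_sub_left (hp : -1 < p) (hxy : x ≤ y) :
    ∫⁻ s in Ioc x y, ‖(y - s) ^ p‖ₑ = ENNReal.ofReal ((y - x) ^ (p + 1) / (p + 1)) := by
  have hint : IntervalIntegrable (fun s => (y - s) ^ p) volume x y := by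
    simpa using
      (intervalIntegral.intervalIntegrable_rpow' hp (a := y - x) (b := 0)).comp_sub_left y
  rw [← ofReal_integral_norm_eq_lintegral_enorm hint.1,
    setIntegral_congr_fun measurableSet_Ioc fun s hs =>
      Real.norm_of_nonneg (rpow_nonneg (sub_nonneg.2 hs.2) p),
    ← intervalIntegral.integral_of_le hxy,
    intervalIntegral.integral_comp_sub_left (fun u => u ^ p) y, sub_self,
    integral_rpow (Or.inl hp), zero_rpow (by linarith), sub_zero]

theorem lintegral_Ioc_enorm_rpow_sub_right (hp : -1 < p) (hxy : x ≤ y) :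
    ∫⁻ s in Ioc x y, ‖(s - x) ^ p‖ₑ = ENNReal.ofReal ((y - x) ^ (p + 1) / (p + 1)) := by
  have hint : IntervalIntegrable (fun s => (s - x) ^ p) volume x y := by
    simpa using
      (intervalIntegral.intervalIntegrable_rpow' hp (a := 0) (b := y - x)).comp_sub_right x
  rw [← ofReal_integral_norm_eq_lintegral_enorm hint.1,
    setIntegral_congr_fun measurableSet_Ioc fun s hs =>
      Real.norm_of_nonneg (rpow_nonneg (sub_nonneg.2 hs.1.le) p),
    ← intervalIntegral.integral_of_le hxy,
    intervalIntegral.integral_comp_sub_right (fun u => u ^ p) x, sub_self,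
    integral_rpow (Or.inl hp), zero_rpow (by linarith), sub_zero]

end PowerKernel

theorem lintegral_Ioc_lintegral_Ioc_swap {μ : Measure ℝ} [SFinite μ] {f : ℝ → ℝ → ℝ≥0∞}
    (hf : Measurable (Function.uncurry f)) (a b : ℝ) :
    ∫⁻ x in Ioc a b, ∫⁻ y in Ioc x b, f x y ∂μ ∂μ =
      ∫⁻ y in Ioc a b, ∫⁻ x in Ioo a y, f x y ∂μ ∂μ := by
  set g : ℝ → ℝ → ℝ≥0∞ := fun x y => if a < x ∧ x < y ∧ y ≤ b then f x y else 0
  have hg : Measurable (Function.uncurry g) :=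
    Measurable.ite ((measurableSet_lt measurable_const measurable_fst).inter
      ((measurableSet_lt measurable_fst measurable_snd).inter
        (measurableSet_le measurable_snd measurable_const))) hf measurable_const
  have h₁ : ∫⁻ x in Ioc a b, ∫⁻ y in Ioc x b, f x y ∂μ ∂μ = ∫⁻ x, ∫⁻ y, g x y ∂μ ∂μ := by
    rw [← lintegral_indicator measurableSet_Ioc]
    refine lintegral_congr fun x => ?_
    by_cases hx : x ∈ Ioc a b
    · rw [indicator_of_mem hx, ← lintegral_indicator measurableSet_Ioc]
      congr 1 with y
      simp [indicator_apply, g, hx.1]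
    · have hxy (y : ℝ) : ¬(a < x ∧ x < y ∧ y ≤ b) := fun h => hx ⟨h.1, h.2.1.le.trans h.2.2⟩
      simp [indicator_of_notMem hx, g, hxy]
  have h₂ : ∫⁻ y in Ioc a b, ∫⁻ x in Ioo a y, f x y ∂μ ∂μ = ∫⁻ y, ∫⁻ x, g x y ∂μ ∂μ := by
    rw [← lintegral_indicator measurableSet_Ioc]
    refine lintegral_congr fun y => ?_
    by_cases hy : y ∈ Ioc a b
    · rw [indicator_of_mem hy, ← lintegral_indicator measurableSet_Ioo]
      congr 1 with x
      simp [indicator_apply, g, hy.2]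
    · have hxy (x : ℝ) : ¬(a < x ∧ x < y ∧ y ≤ b) := fun h => hy ⟨h.1.trans h.2.1, h.2.2⟩
      simp [indicator_of_notMem hy, g, hxy]
  rw [h₁, h₂, lintegral_lintegral_swap hg.aemeasurable]

theorem Measurable.setLIntegral_Ioc {α : Type*} [MeasurableSpace α] {μ : Measure ℝ} [SFinite μ]
    {g : α → ℝ → ℝ≥0∞} (hg : Measurable (Function.uncurry g)) {u : α → ℝ} (hu : Measurable u)
    (a : ℝ) : Measurable fun x => ∫⁻ s in Ioc a (u x), g x s ∂μ := by
  have hS : MeasurableSet {z : α × ℝ | a < z.2 ∧ z.2 ≤ u z.1} :=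
    (measurableSet_lt measurable_const measurable_snd).inter
      (measurableSet_le measurable_snd (hu.comp measurable_fst))
  convert (hg.indicator hS).lintegral_prod_right' (ν := μ) using 2 with x
  rw [← lintegral_indicator measurableSet_Ioc]
  rfl

section Holder

variable {p r q t : ℝ} {c : ℝ → ℝ}

theorem eLpNorm_rpow_sub_restrict_Ioc (hr : 0 < r) (hpr : -1 < p * r) (ht : 0 ≤ t) :
    eLpNorm (fun s => (t - s) ^ p) (ENNReal.ofReal r) (volume.restrict (Ioc 0 t)) =
      ENNReal.ofReal (t ^ (p * r + 1) / (p * r + 1)) ^ (1 / r) := by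
  have h := lintegral_Ioc_enorm_rpow_sub_left hpr ht
  rw [sub_zero] at h
  rw [eLpNorm_eq_lintegral_rpow_enorm_toReal (by simpa using hr) ENNReal.ofReal_ne_top,
    ENNReal.toReal_ofReal hr.le, ← h]
  congr 1
  refine setLIntegral_congr_fun measurableSet_Ioc fun s hs => ?_
  have hts : 0 ≤ t - s := sub_nonneg.2 hs.2
  rw [Real.enorm_of_nonneg (rpow_nonneg hts _), Real.enorm_of_nonneg (rpow_nonneg hts _),
    ENNReal.ofReal_rpow_of_nonneg (rpow_nonneg hts _) hr.le, ← rpow_mul hts]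

theorem lintegral_Ioc_enorm_rpow_sub_mul_le (hrq : r.HolderConjugate q) (hpr : -1 < p * r)
    (ht : 0 ≤ t) (hc : AEStronglyMeasurable c) (x : ℝ) :
    ∫⁻ s in Ioc 0 t, ‖(t - s) ^ p‖ₑ * ‖c (x - s)‖ₑ ≤
      ENNReal.ofReal (t ^ (p * r + 1) / (p * r + 1)) ^ (1 / r) *
        eLpNorm c (ENNReal.ofReal q) volume := by
  have := hrq.ennrealOfReal
  have hx := Measure.measurePreserving_sub_left volume x
  have hcx : eLpNorm (fun s => c (x - s)) (ENNReal.ofReal q) volume =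
      eLpNorm c (ENNReal.ofReal q) volume :=
    eLpNorm_comp_measurePreserving hc hx
  calc ∫⁻ s in Ioc 0 t, ‖(t - s) ^ p‖ₑ * ‖c (x - s)‖ₑ
      = eLpNorm ((fun s => (t - s) ^ p) • fun s => c (x - s)) 1 (volume.restrict (Ioc 0 t)) := by
        simp [eLpNorm_one_eq_lintegral_enorm, enorm_mul]
    _ ≤ eLpNorm (fun s => (t - s) ^ p) (ENNReal.ofReal r) (volume.restrict (Ioc 0 t)) *
          eLpNorm (fun s => c (x - s)) (ENNReal.ofReal q) (volume.restrict (Ioc 0 t)) :=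
        eLpNorm_smul_le_mul_eLpNorm (hc.comp_measurePreserving hx).restrict
          (by fun_prop : Measurable fun s : ℝ => (t - s) ^ p).aestronglyMeasurable
    _ ≤ _ := by
        rw [eLpNorm_rpow_sub_restrict_Ioc hrq.pos hpr ht, ← hcx]
        gcongr
        exact Measure.restrict_le_self

end Holder

noncomputable def kernelIntegral (p : ℝ) (c : ℝ → ℝ) (t₁ t₂ : ℝ) : ℝ≥0∞ :=
  ∫⁻ s₁ in Ioc t₂ t₁, ‖(t₁ - s₁) ^ p‖ₑ * ∫⁻ s₂ in Ioc 0 t₂, ‖(t₂ - s₂) ^ p‖ₑ * ‖c (s₁ - s₂)‖ₑ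

section KernelIntegral

variable {p r q t₁ t₂ : ℝ} {c : ℝ → ℝ}

theorem add_one_div_pos_of_neg_one_lt_mul (hr : 0 < r) (hpr : -1 < p * r) : 0 < p + 1 / r := by
  have h : 0 < (p * r + 1) / r := div_pos (by linarith) hr
  rwa [add_div, mul_div_cancel_right₀ _ hr.ne'] at h

theorem rpow_div_mul_rpow_div_rpow_le (hp : -1 < p) (hr : 0 < r) (hpr : -1 < p * r)
    (h₀ : 0 ≤ t₂) (h₁₂ : t₂ ≤ t₁) :
    (t₁ - t₂) ^ (p + 1) / (p + 1) * (t₂ ^ (p * r + 1) / (p * r + 1)) ^ (1 / r) ≤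
      (p + 1)⁻¹ * (p * r + 1)⁻¹ ^ (1 / r) * t₁ ^ (2 * p + 1 + 1 / r) := by
  have hpr' := add_one_div_pos_of_neg_one_lt_mul hr hpr
  have hp1 : 0 < p + 1 := by linarith
  have hpr1 : 0 < p * r + 1 := by linarith
  have hexp : (p * r + 1) * (1 / r) = p + 1 / r := by field_simp
  rw [div_eq_mul_inv, div_eq_mul_inv (t₂ ^ _), mul_rpow (rpow_nonneg h₀ _) (inv_nonneg.2 hpr1.le),
    ← rpow_mul h₀, hexp, show 2 * p + 1 + 1 / r = (p + 1) + (p + 1 / r) by ring,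
    rpow_add' (h₀.trans h₁₂) (by linarith)]
  calc (t₁ - t₂) ^ (p + 1) * (p + 1)⁻¹ * (t₂ ^ (p + 1 / r) * (p * r + 1)⁻¹ ^ (1 / r))
      = (p + 1)⁻¹ * (p * r + 1)⁻¹ ^ (1 / r) * ((t₁ - t₂) ^ (p + 1) * t₂ ^ (p + 1 / r)) := by ring
    _ ≤ _ := by
        gcongr
        · exact rpow_nonneg (h₀.trans h₁₂) _
        · linarith

theorem kernelIntegral_le (hrq : r.HolderConjugate q) (hp : -1 < p) (hpr : -1 < p * r)
    (hc : AEStronglyMeasurable c) (h₀ : 0 ≤ t₂) (h₁₂ : t₂ ≤ t₁) :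
    kernelIntegral p c t₁ t₂ ≤ ENNReal.ofReal ((p + 1)⁻¹ * (p * r + 1)⁻¹ ^ (1 / r)) *
      eLpNorm c (ENNReal.ofReal q) volume * ENNReal.ofReal (t₁ ^ (2 * p + 1 + 1 / r)) := by
  calc kernelIntegral p c t₁ t₂
      ≤ ∫⁻ s₁ in Ioc t₂ t₁, ‖(t₁ - s₁) ^ p‖ₑ *
          (ENNReal.ofReal (t₂ ^ (p * r + 1) / (p * r + 1)) ^ (1 / r) *
            eLpNorm c (ENNReal.ofReal q) volume) := by
        unfold kernelIntegral
        gcongr with s₁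
        exact lintegral_Ioc_enorm_rpow_sub_mul_le hrq hpr h₀ hc s₁
    _ = ENNReal.ofReal ((t₁ - t₂) ^ (p + 1) / (p + 1) *
          (t₂ ^ (p * r + 1) / (p * r + 1)) ^ (1 / r)) * eLpNorm c (ENNReal.ofReal q) volume := by
        rw [lintegral_mul_const _ (by fun_prop), lintegral_Ioc_enorm_rpow_sub_left hp h₁₂,
          ← mul_assoc, ENNReal.ofReal_rpow_of_nonneg
            (div_nonneg (rpow_nonneg h₀ _) (by linarith)) (one_div_nonneg.2 hrq.pos.le),
          ← ENNReal.ofReal_mul (div_nonneg (rpow_nonneg (sub_nonneg.2 h₁₂) _) (by linarith))]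
    _ ≤ _ := by
        rw [mul_right_comm, ← ENNReal.ofReal_mul' (rpow_nonneg (h₀.trans h₁₂) _)]
        exact mul_le_mul_left
          (ENNReal.ofReal_le_ofReal (rpow_div_mul_rpow_div_rpow_le hp hrq.pos hpr h₀ h₁₂)) _

end KernelIntegral

section Fubini

variable {p t : ℝ} {c : ℝ → ℝ}

theorem lintegral_Ioo_lintegral_Ioc_le (hp : -1 < p) (hc : Measurable c) (s₁ : ℝ) :
    ∫⁻ t₂ in Ioo 0 s₁, ∫⁻ s₂ in Ioc 0 t₂, ‖(t₂ - s₂) ^ p‖ₑ * ‖c (s₁ - s₂)‖ₑ ≤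
      ENNReal.ofReal (p + 1)⁻¹ * ∫⁻ v in Ioi 0, ‖v ^ (p + 1) * |c v|‖ₑ := by
  have hpre : (fun s₂ => s₁ - s₂) ⁻¹' Ici 0 = Iic s₁ := by ext; simp
  calc ∫⁻ t₂ in Ioo 0 s₁, ∫⁻ s₂ in Ioc 0 t₂, ‖(t₂ - s₂) ^ p‖ₑ * ‖c (s₁ - s₂)‖ₑ
      ≤ ∫⁻ t₂ in Ioc 0 s₁, ∫⁻ s₂ in Ioo 0 t₂, ‖(t₂ - s₂) ^ p‖ₑ * ‖c (s₁ - s₂)‖ₑ :=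
        (lintegral_mono_set Ioo_subset_Ioc_self).trans_eq
          (lintegral_congr fun t₂ => setLIntegral_congr Ioo_ae_eq_Ioc.symm)
    _ = ∫⁻ s₂ in Ioc 0 s₁, ∫⁻ t₂ in Ioc s₂ s₁, ‖(t₂ - s₂) ^ p‖ₑ * ‖c (s₁ - s₂)‖ₑ :=
        (lintegral_Ioc_lintegral_Ioc_swap
          (f := fun s₂ t₂ => ‖(t₂ - s₂) ^ p‖ₑ * ‖c (s₁ - s₂)‖ₑ) (by fun_prop) 0 s₁).symm
    _ = ∫⁻ s₂ in Ioc 0 s₁, ENNReal.ofReal ((s₁ - s₂) ^ (p + 1) / (p + 1)) * ‖c (s₁ - s₂)‖ₑ :=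
        setLIntegral_congr_fun measurableSet_Ioc fun s₂ hs₂ => by
          rw [lintegral_mul_const' _ _ enorm_ne_top, lintegral_Ioc_enorm_rpow_sub_right hp hs₂.2]
    _ ≤ ∫⁻ s₂ in Iic s₁, ENNReal.ofReal ((s₁ - s₂) ^ (p + 1) / (p + 1)) * ‖c (s₁ - s₂)‖ₑ :=
        lintegral_mono_set Ioc_subset_Iic_self
    _ = ∫⁻ v in Ioi 0, ENNReal.ofReal (v ^ (p + 1) / (p + 1)) * ‖c v‖ₑ := by
        rw [← hpre, (Measure.measurePreserving_sub_left volume s₁).setLIntegral_comp_preimage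
          measurableSet_Ici (f := fun v => ENNReal.ofReal (v ^ (p + 1) / (p + 1)) * ‖c v‖ₑ)
          (by fun_prop)]
        exact setLIntegral_congr Ioi_ae_eq_Ici.symm
    _ = _ := by
        rw [← lintegral_const_mul' _ _ ENNReal.ofReal_ne_top]
        refine setLIntegral_congr_fun measurableSet_Ioi fun v hv => ?_
        rw [enorm_mul, enorm_abs, Real.enorm_of_nonneg (rpow_nonneg hv.le _), div_eq_mul_inv,
          ENNReal.ofReal_mul (rpow_nonneg hv.le _)]
        ring

theorem lintegral_kernelIntegral_le (hp : -1 < p) (hc : Measurable c) (ht : 0 ≤ t) :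
    ∫⁻ t₂ in Ioc 0 t, kernelIntegral p c t t₂ ≤
      ENNReal.ofReal ((p + 1)⁻¹ * (p + 1)⁻¹) * (∫⁻ v in Ioi 0, ‖v ^ (p + 1) * |c v|‖ₑ) *
        ENNReal.ofReal (t ^ (p + 1)) := by
  set G : ℝ → ℝ → ℝ≥0∞ := fun t₂ s₁ => ∫⁻ s₂ in Ioc 0 t₂, ‖(t₂ - s₂) ^ p‖ₑ * ‖c (s₁ - s₂)‖ₑ
  have hG : Measurable fun z : ℝ × ℝ => ∫⁻ s₂ in Ioc 0 z.1, ‖(z.1 - s₂) ^ p‖ₑ * ‖c (z.2 - s₂)‖ₑ :=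
    Measurable.setLIntegral_Ioc (by fun_prop) measurable_fst 0
  calc ∫⁻ t₂ in Ioc 0 t, kernelIntegral p c t t₂
      = ∫⁻ s₁ in Ioc 0 t, ∫⁻ t₂ in Ioo 0 s₁, ‖(t - s₁) ^ p‖ₑ * G t₂ s₁ :=
        lintegral_Ioc_lintegral_Ioc_swap (f := fun t₂ s₁ => ‖(t - s₁) ^ p‖ₑ * G t₂ s₁)
          ((by fun_prop : Measurable fun z : ℝ × ℝ => ‖(t - z.2) ^ p‖ₑ).mul hG) 0 t
    _ = ∫⁻ s₁ in Ioc 0 t, ‖(t - s₁) ^ p‖ₑ * ∫⁻ t₂ in Ioo 0 s₁, G t₂ s₁ := by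
        simp_rw [lintegral_const_mul' _ _ enorm_ne_top]
    _ ≤ ∫⁻ s₁ in Ioc 0 t, ‖(t - s₁) ^ p‖ₑ *
          (ENNReal.ofReal (p + 1)⁻¹ * ∫⁻ v in Ioi 0, ‖v ^ (p + 1) * |c v|‖ₑ) := by
        gcongr with s₁
        exact lintegral_Ioo_lintegral_Ioc_le hp hc s₁
    _ = ENNReal.ofReal (t ^ (p + 1) / (p + 1)) *
          (ENNReal.ofReal (p + 1)⁻¹ * ∫⁻ v in Ioi 0, ‖v ^ (p + 1) * |c v|‖ₑ) := by
        rw [lintegral_mul_const _ (by fun_prop), lintegral_Ioc_enorm_rpow_sub_left hp ht, sub_zero]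
    _ = _ := by
        rw [div_eq_mul_inv, ENNReal.ofReal_mul (rpow_nonneg ht _),
          ENNReal.ofReal_mul (inv_nonneg.2 (by linarith))]
        ring

end Fubini

section Square

variable {p r q T : ℝ} {c : ℝ → ℝ}

theorem lintegral_lintegral_sq_kernelIntegral_le (hrq : r.HolderConjugate q) (hp : -1 < p)
    (hpr : -1 < p * r) (hc : Measurable c) (hcq : eLpNorm c (ENNReal.ofReal q) volume ≠ ⊤)
    (hT : 0 ≤ T) :
    ∫⁻ t₁ in Ioc 0 T, ∫⁻ t₂ in Ioc 0 t₁, kernelIntegral p c t₁ t₂ ^ 2 ≤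
      ENNReal.ofReal ((p + 1)⁻¹ * (p * r + 1)⁻¹ ^ (1 / r)) * eLpNorm c (ENNReal.ofReal q) volume *
        (ENNReal.ofReal ((p + 1)⁻¹ * (p + 1)⁻¹) * ∫⁻ v in Ioi 0, ‖v ^ (p + 1) * |c v|‖ₑ) *
        ENNReal.ofReal (T ^ (3 * p + 3 + 1 / r)) := by
  set A := ENNReal.ofReal ((p + 1)⁻¹ * (p * r + 1)⁻¹ ^ (1 / r)) *
    eLpNorm c (ENNReal.ofReal q) volume
  set B := ENNReal.ofReal ((p + 1)⁻¹ * (p + 1)⁻¹) * ∫⁻ v in Ioi 0, ‖v ^ (p + 1) * |c v|‖ₑ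
  have hγ : 0 ≤ 3 * p + 2 + 1 / r := by
    linarith [add_one_div_pos_of_neg_one_lt_mul hrq.pos hpr]
  have hsq : ∀ t₁ ∈ Ioc 0 T, ∫⁻ t₂ in Ioc 0 t₁, kernelIntegral p c t₁ t₂ ^ 2 ≤
      A * B * ENNReal.ofReal (T ^ (3 * p + 2 + 1 / r)) := by
    intro t₁ ht₁
    calc ∫⁻ t₂ in Ioc 0 t₁, kernelIntegral p c t₁ t₂ ^ 2
        ≤ ∫⁻ t₂ in Ioc 0 t₁,
            A * ENNReal.ofReal (t₁ ^ (2 * p + 1 + 1 / r)) * kernelIntegral p c t₁ t₂ :=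
          setLIntegral_mono' measurableSet_Ioc fun t₂ ht₂ => by
            rw [sq]
            gcongr
            exact kernelIntegral_le hrq hp hpr hc.aestronglyMeasurable ht₂.1.le ht₂.2
      _ = A * ENNReal.ofReal (t₁ ^ (2 * p + 1 + 1 / r)) *
            ∫⁻ t₂ in Ioc 0 t₁, kernelIntegral p c t₁ t₂ :=
          lintegral_const_mul' _ _ (by finiteness)
      _ ≤ A * ENNReal.ofReal (t₁ ^ (2 * p + 1 + 1 / r)) * (B * ENNReal.ofReal (t₁ ^ (p + 1))) := by
          gcongr
          exact lintegral_kernelIntegral_le hp hc ht₁.1.le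
      _ = A * B * ENNReal.ofReal (t₁ ^ (3 * p + 2 + 1 / r)) := by
          rw [show 3 * p + 2 + 1 / r = (2 * p + 1 + 1 / r) + (p + 1) by ring,
            rpow_add ht₁.1 (2 * p + 1 + 1 / r) (p + 1),
            ENNReal.ofReal_mul (rpow_nonneg ht₁.1.le _)]
          ring
      _ ≤ A * B * ENNReal.ofReal (T ^ (3 * p + 2 + 1 / r)) := by
          gcongr
          · exact ht₁.1.le
          · exact ht₁.2
  calc ∫⁻ t₁ in Ioc 0 T, ∫⁻ t₂ in Ioc 0 t₁, kernelIntegral p c t₁ t₂ ^ 2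
      ≤ ∫⁻ _ in Ioc 0 T, A * B * ENNReal.ofReal (T ^ (3 * p + 2 + 1 / r)) :=
        setLIntegral_mono' measurableSet_Ioc hsq
    _ = A * B * ENNReal.ofReal (T ^ (3 * p + 3 + 1 / r)) := by
        rw [setLIntegral_const, Real.volume_Ioc, sub_zero, mul_assoc,
          ← ENNReal.ofReal_mul (rpow_nonneg hT _), ← rpow_add_one' hT (by linarith)]
        ring_nf

end Square

theorem enorm_intervalIntegral_le_kernelIntegral {p t₁ t₂ : ℝ} (c : ℝ → ℝ) (h₀ : 0 ≤ t₂)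
    (h₁₂ : t₂ ≤ t₁) :
    ‖∫ s₁ in t₂..t₁, ∫ s₂ in 0..t₂, (t₁ - s₁) ^ p * (t₂ - s₂) ^ p * |c (s₁ - s₂)|‖ₑ ≤
      kernelIntegral p c t₁ t₂ := by
  rw [intervalIntegral.integral_of_le h₁₂]
  refine (enorm_integral_le_lintegral_enorm _).trans (lintegral_mono fun s₁ => ?_)
  rw [intervalIntegral.integral_of_le h₀, ← lintegral_const_mul' _ _ enorm_ne_top]
  refine (enorm_integral_le_lintegral_enorm _).trans_eq (lintegral_congr fun s₂ => ?_)
  rw [enorm_mul, enorm_mul, enorm_abs, mul_assoc]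

theorem enorm_intervalIntegral_sq_le {p T : ℝ} (c : ℝ → ℝ) (hT : 1 ≤ T) :
    ‖∫ t₁ in (1 : ℝ)..T, ∫ t₂ in (0 : ℝ)..(t₁ - 1),
        (∫ s₁ in t₂..t₁, ∫ s₂ in (0 : ℝ)..t₂, (t₁ - s₁) ^ p * (t₂ - s₂) ^ p * |c (s₁ - s₂)|) ^ 2‖ₑ ≤
      ∫⁻ t₁ in Ioc 0 T, ∫⁻ t₂ in Ioc 0 t₁, kernelIntegral p c t₁ t₂ ^ 2 := by
  rw [intervalIntegral.integral_of_le hT]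
  refine (enorm_integral_le_lintegral_enorm _).trans
    ((setLIntegral_mono' measurableSet_Ioc fun t₁ ht₁ => ?_).trans
      (lintegral_mono_set (Ioc_subset_Ioc_left zero_le_one)))
  rw [intervalIntegral.integral_of_le (by linarith [ht₁.1])]
  refine (enorm_integral_le_lintegral_enorm _).trans
    ((setLIntegral_mono' measurableSet_Ioc fun t₂ ht₂ => ?_).trans
      (lintegral_mono_set (Ioc_subset_Ioc_right (by linarith))))
  rw [enorm_pow]
  gcongr
  exact enorm_intervalIntegral_le_kernelIntegral c ht₂.1.le (by linarith [ht₂.2])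

theorem exists_intervalIntegral_sq_le {p r q : ℝ} {c : ℝ → ℝ} (hrq : r.HolderConjugate q)
    (hp : -1 < p) (hpr : -1 < p * r) (hc : Measurable c)
    (hcq : eLpNorm c (ENNReal.ofReal q) volume ≠ ⊤)
    (hM : ∫⁻ v in Ioi 0, ‖v ^ (p + 1) * |c v|‖ₑ ≠ ⊤) :
    ∃ K : ℝ, ∀ T ≥ (1 : ℝ), ∫ t₁ in (1 : ℝ)..T, ∫ t₂ in (0 : ℝ)..(t₁ - 1),
        (∫ s₁ in t₂..t₁, ∫ s₂ in (0 : ℝ)..t₂,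
          (t₁ - s₁) ^ p * (t₂ - s₂) ^ p * |c (s₁ - s₂)|) ^ 2 ≤ K * T ^ (3 * p + 3 + 1 / r) := by
  refine ⟨(ENNReal.ofReal ((p + 1)⁻¹ * (p * r + 1)⁻¹ ^ (1 / r)) *
    eLpNorm c (ENNReal.ofReal q) volume *
    (ENNReal.ofReal ((p + 1)⁻¹ * (p + 1)⁻¹) * ∫⁻ v in Ioi 0, ‖v ^ (p + 1) * |c v|‖ₑ)).toReal,
    fun T hT => ?_⟩
  have h := (enorm_intervalIntegral_sq_le c hT).trans
    (lintegral_lintegral_sq_kernelIntegral_le hrq hp hpr hc hcq (by linarith))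
  refine (Real.le_norm_self _).trans ((toReal_enorm _).symm.trans_le
    ((ENNReal.toReal_mono (by finiteness) h).trans_eq ?_))
  rw [ENNReal.toReal_mul, ENNReal.toReal_ofReal (rpow_nonneg (by linarith) _)]

theorem stmt_7_general (H r q : ℝ) (hH : H ∈ Set.Ioo (0 : ℝ) (1/2))
    (hr : r ∈ Set.Ioo (1 : ℝ) (H + 1/2)⁻¹) (hq : q = r / (r - 1))
    (c : ℝ → ℝ) (hc : Measurable c)
    (hLq : eLpNorm c (ENNReal.ofReal q) volume < ⊤)
    (hmom : IntegrableOn (fun v : ℝ => v ^ (1/2 - H) * |c v|) (Set.Ioi (0 : ℝ))) :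
    ∃ C > 0, ∀ T ≥ (1 : ℝ),
      (1 / T ^ 2) * ∫ t₁ in (1 : ℝ)..T, ∫ t₂ in (0 : ℝ)..(t₁ - 1),
          (∫ s₁ in t₂..t₁, ∫ s₂ in (0 : ℝ)..t₂,
            (t₁ - s₁) ^ (-H - 1/2) * (t₂ - s₂) ^ (-H - 1/2) * |c (s₁ - s₂)|) ^ 2 ≤
        C * T ^ (1/r - 1/2 - 3*H) := by
  obtain ⟨hH₀, hH₁⟩ := hH
  obtain ⟨hr₁, hrH⟩ := hr
  have hpr : -1 < (-H - 1/2) * r := by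
    have h := mul_lt_mul_of_pos_right hrH (by linarith : 0 < H + 1/2)
    rw [inv_mul_cancel₀ (by linarith)] at h
    linarith
  have hM : ∫⁻ v in Ioi 0, ‖v ^ (-H - 1/2 + 1) * |c v|‖ₑ ≠ ⊤ := by
    rw [show -H - 1/2 + 1 = 1/2 - H by ring]
    exact hmom.2.ne
  obtain ⟨K, hK⟩ := exists_intervalIntegral_sq_le
    ((Real.holderConjugate_iff_eq_conjExponent hr₁).2 hq) (by linarith) hpr hc hLq.ne hM
  refine ⟨|K| + 1, by positivity, fun T hT => ?_⟩
  have hT₀ : 0 < T := by linarith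
  calc _ ≤ 1 / T ^ 2 * (K * T ^ (3 * (-H - 1/2) + 3 + 1 / r)) := by gcongr; exact hK T hT
    _ = K * T ^ (1/r - 1/2 - 3*H) := by
        rw [show 3 * (-H - 1/2) + 3 + 1 / r = (1/r - 1/2 - 3*H) + 2 by ring, rpow_add hT₀,
          rpow_two]
        field_simp
    _ ≤ (|K| + 1) * T ^ (1/r - 1/2 - 3*H) := by gcongr; linarith [le_abs_self K]

/-- Bound for the term `I_{2,2}(T)`: for `H ∈ (0,1/2)`, `r ∈ (1,(H+1/2)⁻¹)`, `q = r/(r-1)`,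
and an even `c ∈ L^q(ℝ)` with `∫₀^∞ v^{1/2-H}|c(v)| dv < ∞`, there is `C > 0` such that
for all `T ≥ 1`,
`(1/T²) ∫₁^T ∫₀^{t₁-1} (∫_{t₂}^{t₁}∫₀^{t₂} (t₁-s₁)^{-H-1/2}(t₂-s₂)^{-H-1/2}|c(s₁-s₂)| ds₂ ds₁)² dt₂ dt₁
  ≤ C T^{1/r - 1/2 - 3H}`. -/
theorem stmt_7 (H r q : ℝ) (hH : H ∈ Set.Ioo (0 : ℝ) (1/2))
    (hr : r ∈ Set.Ioo (1 : ℝ) (H + 1/2)⁻¹) (hq : q = r / (r - 1))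
    (c : ℝ → ℝ) (hc : Measurable c) (heven : ∀ t : ℝ, c (-t) = c t)
    (hLq : eLpNorm c (ENNReal.ofReal q) volume < ⊤)
    (hmom : IntegrableOn (fun v : ℝ => v ^ (1/2 - H) * |c v|) (Set.Ioi (0 : ℝ))) :
    ∃ C > 0, ∀ T ≥ (1 : ℝ),
      (1 / T ^ 2) * ∫ t₁ in (1 : ℝ)..T, ∫ t₂ in (0 : ℝ)..(t₁ - 1),
          (∫ s₁ in t₂..t₁, ∫ s₂ in (0 : ℝ)..t₂,
            (t₁ - s₁) ^ (-H - 1/2) * (t₂ - s₂) ^ (-H - 1/2) * |c (s₁ - s₂)|) ^ 2 ≤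
        C * T ^ (1/r - 1/2 - 3*H) :=
  stmt_7_general H r q hH hr hq c hc hLq hmom
end

section
/- Let H ∈ (0, 1/2), let r ∈ (1, (H+1/2)^{−1}), let q := r/(r−1), and let c : ℝ → ℝ be measurable with ‖c‖_{L^q(ℝ)} < ∞. Then there exists a constant C > 0, depending only on H, r and ‖c‖_{L^q(ℝ)}, such that for all T ≥ 1: (1/T²)·∫₁^{T} ∫_{t₁−1}^{t₁} ( ∫₀^{t₁} ∫₀^{t₂} (t₁−s₁)^{−H−1/2}(t₂−s₂)^{−H−1/2} |c(s₁−s₂)| ds₂ ds₁ )² dt₂ dt₁ ≤ C·T^{2/r − (4H+1)}. -/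
/-!
Hölder's inequality in `s₂` with exponents `r` and `q` bounds the innermost integral by
`‖c‖_q (t₂^{1-r(H+1/2)} / (1-r(H+1/2)))^{1/r}`, uniformly in `s₁` because Lebesgue measure is
translation invariant. Integrating the remaining kernel `(t₁-s₁)^{-H-1/2}` gives
`C t₁^{1/r-2H}` for the double integral. Squaring and integrating over the unit window in `t₂`
and over `t₁ ∈ [1, T]` gives `C² T^{2/r-4H+1} / (2/r-4H+1)`, where `2/r - 4H > 1 - 2H > 0`
because `1 < r < (H + 1/2)⁻¹`.
-/

open Real MeasureTheory Set

lemma intervalIntegral.integral_mono_on_of_nonneg {f g : ℝ → ℝ} {a b : ℝ} (hab : a ≤ b)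
    (hf : ∀ x ∈ Icc a b, 0 ≤ f x) (hfg : ∀ x ∈ Icc a b, f x ≤ g x)
    (hg : IntervalIntegrable g volume a b) :
    ∫ x in a..b, f x ≤ ∫ x in a..b, g x := by
  simpa only [intervalIntegral.integral_of_le hab] using setIntegral_mono_of_nonneg
    (fun x hx => hf x (Ioc_subset_Icc_self hx)) (fun x hx => hfg x (Ioc_subset_Icc_self hx)) hg.1

lemma intervalIntegrable_sub_rpow {a : ℝ} (ha : -1 < a) (t : ℝ) :
    IntervalIntegrable (fun s => (t - s) ^ a) volume 0 t := by
  simpa using (intervalIntegral.intervalIntegrable_rpow' ha (a := t) (b := 0)).comp_sub_left t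

lemma integral_sub_rpow {a : ℝ} (ha : -1 < a) (t : ℝ) :
    ∫ s in (0 : ℝ)..t, (t - s) ^ a = t ^ (a + 1) / (a + 1) := by
  rw [intervalIntegral.integral_comp_sub_left (fun s => s ^ a), sub_self, sub_zero,
    integral_rpow (Or.inl ha), zero_rpow (by linarith), sub_zero]

lemma memLp_sub_rpow_restrict_Ioc {a p : ℝ} (hp : 0 < p) (ha : -1 < a * p) (t : ℝ) :
    MemLp (fun s => (t - s) ^ a) (ENNReal.ofReal p) (volume.restrict (Ioc 0 t)) := by
  have hmeas : Measurable fun s : ℝ => (t - s) ^ a := by fun_prop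
  rw [← integrable_norm_rpow_iff hmeas.aestronglyMeasurable (by simpa using hp)
    ENNReal.ofReal_ne_top, ENNReal.toReal_ofReal hp.le]
  refine (intervalIntegrable_sub_rpow ha t).1.congr_fun (fun s hs => ?_) measurableSet_Ioc
  rw [norm_of_nonneg (rpow_nonneg (sub_nonneg.2 hs.2) a), ← rpow_mul (sub_nonneg.2 hs.2)]

lemma setIntegral_Ioc_sub_rpow_rpow {a p t : ℝ} (ha : -1 < a * p) (ht : 0 ≤ t) :
    ∫ s in Ioc 0 t, ((t - s) ^ a) ^ p = t ^ (a * p + 1) / (a * p + 1) := by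
  rw [setIntegral_congr_fun measurableSet_Ioc (g := fun s => (t - s) ^ (a * p))
      (fun s hs => (rpow_mul (sub_nonneg.2 hs.2) a p).symm),
    ← intervalIntegral.integral_of_le ht, integral_sub_rpow ha]

lemma setIntegral_mul_abs_comp_sub_le {r q : ℝ} (hrq : r.HolderConjugate q) {s : Set ℝ}
    (hs : MeasurableSet s) {f c : ℝ → ℝ} (hf₀ : ∀ y ∈ s, 0 ≤ f y)
    (hf : MemLp f (ENNReal.ofReal r) (volume.restrict s)) (hc : MemLp c (ENNReal.ofReal q))
    (x : ℝ) :
    ∫ y in s, f y * |c (x - y)| ≤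
      (∫ y in s, f y ^ r) ^ (1 / r) * (eLpNorm c (ENNReal.ofReal q)).toReal := by
  have hq₀ : ENNReal.ofReal q ≠ 0 := by simpa using hrq.symm.pos
  have hq : (ENNReal.ofReal q).toReal = q := ENNReal.toReal_ofReal hrq.symm.nonneg
  have hcx : MemLp (fun y => c (x - y)) (ENNReal.ofReal q) (volume.restrict s) :=
    (hc.comp_measurePreserving (Measure.measurePreserving_sub_left volume x)).restrict s
  have holder := integral_mul_norm_le_Lp_mul_Lq hrq hf hcx
  have hnorm_f : EqOn (fun y => ‖f y‖) f s := fun y hy => Real.norm_of_nonneg (hf₀ y hy)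
  rw [setIntegral_congr_fun hs (f := fun y => ‖f y‖ * ‖c (x - y)‖)
      (g := fun y => f y * |c (x - y)|) (fun y hy => by simp only [hnorm_f hy, Real.norm_eq_abs]),
    setIntegral_congr_fun hs (f := fun y => ‖f y‖ ^ r) (g := fun y => f y ^ r)
      (fun y hy => by simp only [hnorm_f hy])] at holder
  have hc_int : Integrable (fun y => ‖c y‖ ^ q) := by
    simpa [hq] using hc.integrable_norm_rpow hq₀ ENNReal.ofReal_ne_top
  have translate : ∫ y in s, ‖c (x - y)‖ ^ q ≤ ∫ y, ‖c y‖ ^ q := by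
    rw [← integral_sub_left_eq_self (fun y => ‖c y‖ ^ q) volume x]
    exact setIntegral_le_integral (hc_int.comp_sub_left x) (.of_forall fun _ => by positivity)
  rw [hc.eLpNorm_eq_integral_rpow_norm hq₀ ENNReal.ofReal_ne_top, hq,
    ENNReal.toReal_ofReal (rpow_nonneg (integral_nonneg fun _ => by positivity) _), ← one_div]
  refine holder.trans (mul_le_mul_of_nonneg_left ?_
    (rpow_nonneg (setIntegral_nonneg hs fun y hy => rpow_nonneg (hf₀ y hy) r) _))
  exact rpow_le_rpow (setIntegral_nonneg_of_ae_restrict (.of_forall fun _ => by positivity))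
    translate hrq.symm.one_div_nonneg

lemma integral_sub_rpow_mul_abs_comp_sub_le {a r q t : ℝ} (hrq : r.HolderConjugate q)
    (ha : -1 < a * r) (ht : 0 ≤ t) {c : ℝ → ℝ} (hc : MemLp c (ENNReal.ofReal q)) (x : ℝ) :
    ∫ s in (0 : ℝ)..t, (t - s) ^ a * |c (x - s)| ≤
      (t ^ (a * r + 1) / (a * r + 1)) ^ (1 / r) * (eLpNorm c (ENNReal.ofReal q)).toReal := by
  rw [intervalIntegral.integral_of_le ht, ← setIntegral_Ioc_sub_rpow_rpow ha ht]
  exact setIntegral_mul_abs_comp_sub_le hrq measurableSet_Ioc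
    (fun s hs => rpow_nonneg (sub_nonneg.2 hs.2) a) (memLp_sub_rpow_restrict_Ioc hrq.pos ha t) hc x

lemma abs_integral_integral_sub_rpow_mul_le {a r q t₁ t₂ : ℝ} (hrq : r.HolderConjugate q)
    (ha : -1 < a * r) (ht₁ : 0 < t₁) (ht₂ : t₂ ∈ Icc 0 t₁) {c : ℝ → ℝ}
    (hc : MemLp c (ENNReal.ofReal q)) :
    |(∫ s₁ in (0 : ℝ)..t₁, ∫ s₂ in (0 : ℝ)..t₂, (t₁ - s₁) ^ a * (t₂ - s₂) ^ a * |c (s₁ - s₂)|)| ≤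
      (eLpNorm c (ENNReal.ofReal q)).toReal / ((a + 1) * (a * r + 1) ^ (1 / r)) *
        t₁ ^ (2 * a + 1 + 1 / r) := by
  have ha' : -1 < a := by nlinarith [hrq.lt]
  have har : 0 < a * r + 1 := by linarith
  set N := (eLpNorm c (ENNReal.ofReal q)).toReal
  set B := (t₁ ^ (a * r + 1) / (a * r + 1)) ^ (1 / r) * N with hB
  have inner_nonneg : ∀ s₁ ∈ Icc 0 t₁, 0 ≤ ∫ s₂ in (0 : ℝ)..t₂,
      (t₁ - s₁) ^ a * (t₂ - s₂) ^ a * |c (s₁ - s₂)| := fun s₁ hs₁ =>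
    intervalIntegral.integral_nonneg ht₂.1 fun s₂ hs₂ => by
      have := sub_nonneg.2 hs₁.2
      have := sub_nonneg.2 hs₂.2
      positivity
  have inner_le : ∀ s₁ ∈ Icc 0 t₁, ∫ s₂ in (0 : ℝ)..t₂,
      (t₁ - s₁) ^ a * (t₂ - s₂) ^ a * |c (s₁ - s₂)| ≤ (t₁ - s₁) ^ a * B := by
    intro s₁ hs₁
    simp only [mul_assoc]
    rw [intervalIntegral.integral_const_mul]
    refine mul_le_mul_of_nonneg_left ?_ (rpow_nonneg (sub_nonneg.2 hs₁.2) a)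
    refine (integral_sub_rpow_mul_abs_comp_sub_le hrq ha ht₂.1 hc s₁).trans ?_
    rw [hB]
    refine mul_le_mul_of_nonneg_right (rpow_le_rpow (div_nonneg (rpow_nonneg ht₂.1 _) har.le) ?_
      hrq.one_div_nonneg) ENNReal.toReal_nonneg
    exact div_le_div_of_nonneg_right (rpow_le_rpow ht₂.1 ht₂.2 har.le) har.le
  rw [abs_of_nonneg (intervalIntegral.integral_nonneg ht₁.le inner_nonneg)]
  calc _ ≤ ∫ s₁ in (0 : ℝ)..t₁, (t₁ - s₁) ^ a * B :=
        intervalIntegral.integral_mono_on_of_nonneg ht₁.le inner_nonneg inner_le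
          ((intervalIntegrable_sub_rpow ha' t₁).mul_const B)
    _ = t₁ ^ (a + 1) / (a + 1) * B := by
        rw [intervalIntegral.integral_mul_const, integral_sub_rpow ha']
    _ = N / ((a + 1) * (a * r + 1) ^ (1 / r)) * t₁ ^ (2 * a + 1 + 1 / r) := by
        have hr := hrq.ne_zero
        rw [hB, div_rpow (rpow_nonneg ht₁.le _) har.le, ← rpow_mul ht₁.le,
          show (a * r + 1) * (1 / r) = a + 1 / r by field_simp,
          show 2 * a + 1 + 1 / r = (a + 1) + (a + 1 / r) by ring, rpow_add ht₁ (a + 1)]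
        field_simp

lemma integral_integral_sq_le_of_abs_le_rpow {F : ℝ → ℝ → ℝ} {K e T : ℝ} (he : -1 < 2 * e)
    (hT : 1 ≤ T) (hF : ∀ t₁ ≥ 1, ∀ t₂ ∈ Icc (t₁ - 1) t₁, |F t₁ t₂| ≤ K * t₁ ^ e) :
    1 / T ^ 2 * ∫ t₁ in (1 : ℝ)..T, ∫ t₂ in (t₁ - 1)..t₁, F t₁ t₂ ^ 2 ≤
      K ^ 2 / (2 * e + 1) * T ^ (2 * e - 1) := by
  have hT₀ : 0 < T := by linarith
  have he₁ : 0 < 2 * e + 1 := by linarith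
  have hsq : ∀ t₁ ∈ Icc 1 T, ∫ t₂ in (t₁ - 1)..t₁, F t₁ t₂ ^ 2 ≤ K ^ 2 * t₁ ^ (2 * e) := by
    intro t₁ ht₁
    calc _ ≤ ∫ _ in (t₁ - 1)..t₁, (K * t₁ ^ e) ^ 2 :=
          intervalIntegral.integral_mono_on_of_nonneg (by linarith) (fun _ _ => sq_nonneg _)
            (fun t₂ ht₂ => sq_le_sq.2 ((hF t₁ ht₁.1 t₂ ht₂).trans (le_abs_self _)))
            intervalIntegrable_const
      _ = K ^ 2 * t₁ ^ (2 * e) := by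
          rw [intervalIntegral.integral_const, sub_sub_cancel, one_smul, mul_pow,
            ← rpow_mul_natCast (by linarith [ht₁.1]), Nat.cast_ofNat, mul_comm e]
  have hint : ∫ t₁ in (1 : ℝ)..T, ∫ t₂ in (t₁ - 1)..t₁, F t₁ t₂ ^ 2 ≤
      K ^ 2 * (T ^ (2 * e + 1) / (2 * e + 1)) :=
    calc _ ≤ ∫ t₁ in (1 : ℝ)..T, K ^ 2 * t₁ ^ (2 * e) :=
          intervalIntegral.integral_mono_on_of_nonneg hT
            (fun t₁ _ => intervalIntegral.integral_nonneg (by linarith) fun _ _ => sq_nonneg _)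
            hsq ((intervalIntegral.intervalIntegrable_rpow' he).const_mul _)
      _ = K ^ 2 * ((T ^ (2 * e + 1) - 1) / (2 * e + 1)) := by
          rw [intervalIntegral.integral_const_mul, integral_rpow (Or.inl he), one_rpow]
      _ ≤ K ^ 2 * (T ^ (2 * e + 1) / (2 * e + 1)) := by
          gcongr
          linarith
  calc _ ≤ 1 / T ^ 2 * (K ^ 2 * (T ^ (2 * e + 1) / (2 * e + 1))) := by gcongr
    _ = K ^ 2 / (2 * e + 1) * T ^ (2 * e - 1) := by
        rw [show 2 * e + 1 = (2 * e - 1) + 2 by ring, rpow_add hT₀, rpow_two]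
        field_simp

theorem stmt_8_general (H r q : ℝ)
    (hr : r ∈ Set.Ioo (1 : ℝ) (H + 1/2)⁻¹) (hq : q = r / (r - 1))
    (c : ℝ → ℝ) (hc : Measurable c)
    (hLq : eLpNorm c (ENNReal.ofReal q) volume < ⊤) :
    ∃ C > 0, ∀ T ≥ (1 : ℝ),
      (1 / T ^ 2) * ∫ t₁ in (1 : ℝ)..T, ∫ t₂ in (t₁ - 1)..t₁,
          (∫ s₁ in (0 : ℝ)..t₁, ∫ s₂ in (0 : ℝ)..t₂,
            (t₁ - s₁) ^ (-H - 1/2) * (t₂ - s₂) ^ (-H - 1/2) * |c (s₁ - s₂)|) ^ 2 ≤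
        C * T ^ (2/r - (4*H + 1)) := by
  obtain ⟨hr₁, hr_lt⟩ := hr
  have hrq : r.HolderConjugate q := (holderConjugate_iff_eq_conjExponent hr₁).2 hq
  have hα : 0 < H + 1/2 := inv_pos.1 (by linarith)
  have hrα : r * (H + 1/2) < 1 := by
    simpa only [inv_mul_cancel₀ hα.ne'] using mul_lt_mul_of_pos_right hr_lt hα
  have hα_lt : H + 1/2 < 1/r := (lt_div_iff₀' (by linarith)).2 hrα
  have hr_inv : 1/r < 1 := (div_lt_one (by linarith)).2 hr₁
  set e := 2 * (-H - 1/2) + 1 + 1/r with he_def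
  have he : -1 < 2 * e := by linarith
  set K := (eLpNorm c (ENNReal.ofReal q)).toReal /
    ((-H - 1/2 + 1) * ((-H - 1/2) * r + 1) ^ (1 / r))
  have he₁ : 0 < 2 * e + 1 := by linarith
  refine ⟨K ^ 2 / (2 * e + 1) + 1, by positivity, fun T hT => ?_⟩
  have bound := integral_integral_sq_le_of_abs_le_rpow he hT fun t₁ ht₁ t₂ ht₂ =>
    abs_integral_integral_sub_rpow_mul_le hrq (by linarith) (by linarith)
      ⟨by linarith [ht₂.1], ht₂.2⟩ ⟨hc.aestronglyMeasurable, hLq⟩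
  rw [show 2/r - (4*H + 1) = 2 * e - 1 by ring]
  exact bound.trans (by gcongr; linarith)

/-- Bound for the term `I₃(T)`: for `H ∈ (0,1/2)`, `r ∈ (1,(H+1/2)⁻¹)`, `q = r/(r-1)` and
`c ∈ L^q(ℝ)`, there is `C > 0` such that for all `T ≥ 1`,
`(1/T²) ∫₁^T ∫_{t₁-1}^{t₁} (∫₀^{t₁}∫₀^{t₂} (t₁-s₁)^{-H-1/2}(t₂-s₂)^{-H-1/2}|c(s₁-s₂)| ds₂ ds₁)² dt₂ dt₁
  ≤ C T^{2/r - (4H+1)}`. -/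
theorem stmt_8 (H r q : ℝ) (hH : H ∈ Set.Ioo (0 : ℝ) (1/2))
    (hr : r ∈ Set.Ioo (1 : ℝ) (H + 1/2)⁻¹) (hq : q = r / (r - 1))
    (c : ℝ → ℝ) (hc : Measurable c)
    (hLq : eLpNorm c (ENNReal.ofReal q) volume < ⊤) :
    ∃ C > 0, ∀ T ≥ (1 : ℝ),
      (1 / T ^ 2) * ∫ t₁ in (1 : ℝ)..T, ∫ t₂ in (t₁ - 1)..t₁,
          (∫ s₁ in (0 : ℝ)..t₁, ∫ s₂ in (0 : ℝ)..t₂,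
            (t₁ - s₁) ^ (-H - 1/2) * (t₂ - s₂) ^ (-H - 1/2) * |c (s₁ - s₂)|) ^ 2 ≤
        C * T ^ (2/r - (4*H + 1)) :=
  stmt_8_general H r q hr hq c hc hLq
end
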